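/- arXiv:1410.3564 — 10 statements merged into one kernel-verified Lean document; each statement's English description precedes it below -/
import Mathlib

section
/- Let S = {v₁, …, vₙ} be a finite nonempty set of points in ℝ^m and let p ∈ ℝ^m. Then p ∈ conv(S) if and only if for every p' ∈ conv(S) there exists v ∈ S with d(p', v) ≥ d(p, v) (i.e., every point of conv(S) admits a pivot). -/
/-!
Points strictly closer to `p'` than to `p` form an open half-space, which is convex; so if `p`
lies in `conv(S)`, not every point of `S` can be strictly closer to `p'`. Conversely, if `p` lies
outside the compact convex set `conv(S)`, its nearest point `q` in `conv(S)` sees `p` and any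
`v ∈ conv(S)` at an obtuse angle, hence `d(q, v) < d(p, v)`: `q` has no pivot.
-/

open RealInnerProductSpace

variable {E : Type*} [NormedAddCommGroup E] [InnerProductSpace ℝ E]

theorem dist_lt_dist_iff_inner_lt (a b x : E) :
    dist a x < dist b x ↔ ⟪b - a, x⟫ < (‖b‖ ^ 2 - ‖a‖ ^ 2) / 2 := by
  rw [← pow_lt_pow_iff_left₀ dist_nonneg dist_nonneg two_ne_zero, dist_eq_norm, dist_eq_norm,
    norm_sub_sq_real, norm_sub_sq_real, inner_sub_left]
  constructor <;> intro h <;> linarith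

theorem convex_setOf_dist_lt_dist (a b : E) : Convex ℝ {x : E | dist a x < dist b x} := by
  simp only [dist_lt_dist_iff_inner_lt a b]
  exact convex_halfSpace_lt (innerₛₗ ℝ (b - a)).isLinear _

theorem exists_dist_le_dist_of_mem_convexHull {s : Set E} {p : E} (hp : p ∈ convexHull ℝ s)
    (p' : E) : ∃ v ∈ s, dist p v ≤ dist p' v := by
  by_contra! hcloser
  have hp' : dist p' p < dist p p :=
    convexHull_min (fun v hv => hcloser v hv) (convex_setOf_dist_lt_dist p' p) hp
  exact (dist_self p ▸ hp').not_ge dist_nonneg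

theorem exists_forall_dist_lt_dist_of_notMem {K : Set E} (hne : K.Nonempty)
    (hcomplete : IsComplete K) (hconvex : Convex ℝ K) {p : E} (hp : p ∉ K) :
    ∃ q ∈ K, ∀ v ∈ K, dist q v < dist p v := by
  obtain ⟨q, hq, hmin⟩ := exists_norm_eq_iInf_of_complete_convex hne hcomplete hconvex p
  have hobtuse := (norm_eq_iInf_iff_real_inner_le_zero hconvex hq).mp hmin
  have hpq : 0 < ‖p - q‖ := norm_pos_iff.mpr (sub_ne_zero.mpr fun h => hp (h ▸ hq))
  refine ⟨q, hq, fun v hv => ?_⟩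
  have hexpand : ‖p - v‖ ^ 2 = ‖p - q‖ ^ 2 - 2 * ⟪p - q, v - q⟫ + ‖v - q‖ ^ 2 := by
    rw [← norm_sub_sq_real, sub_sub_sub_cancel_right]
  rw [dist_eq_norm, dist_eq_norm, norm_sub_rev q, ← pow_lt_pow_iff_left₀ (norm_nonneg _)
    (norm_nonneg _) two_ne_zero]
  nlinarith [hobtuse v hv]

/-- **Distance Duality.** `p ∈ conv(S)` iff every `p' ∈ conv(S)` admits a pivot,
i.e. a point `v ∈ S` with `d(p', v) ≥ d(p, v)`. -/
theorem distance_duality {m : ℕ} (S : Finset (EuclideanSpace ℝ (Fin m)))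
    (hS : S.Nonempty) (p : EuclideanSpace ℝ (Fin m)) :
    p ∈ convexHull ℝ (S : Set (EuclideanSpace ℝ (Fin m))) ↔
      ∀ p' ∈ convexHull ℝ (S : Set (EuclideanSpace ℝ (Fin m))),
        ∃ v ∈ S, dist p v ≤ dist p' v := by
  refine ⟨fun hp p' _ => exists_dist_le_dist_of_mem_convexHull hp p', fun hpivot => ?_⟩
  by_contra hp
  obtain ⟨q, hq, hcloser⟩ := exists_forall_dist_lt_dist_of_notMem
    (hS.to_set.mono (subset_convexHull ℝ _))
    (S.finite_toSet.isCompact_convexHull ℝ).isComplete (convex_convexHull ℝ _) hp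
  obtain ⟨v, hv, hle⟩ := hpivot q hq
  exact (hcloser v (subset_convexHull ℝ _ hv)).not_ge hle
end

section
/- Let S = {v₁, …, vₙ} be a finite nonempty set of points in ℝ^m and let p ∈ ℝ^m with p ∉ S. Then p ∈ conv(S) if and only if for every p' ∈ conv(S) with p' ≠ p there exists v ∈ S with ⟨p' − p, v − p⟩ ≤ 0 (i.e., the angle ∠p'pv is at least π/2; such a v is a strict pivot). -/
open RealInnerProductSpace

/-!
If `p ∈ conv(S)`, the linear functional `⟪w, ·⟫` attains its minimum over `conv(S)` at a point
of `S`, so some `v ∈ S` has `⟪w, v - p⟫ ≤ 0` for every direction `w`. Conversely, if `p ∉ conv(S)`,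
let `p'` be the nearest point of `conv(S)` to `p`: the variational inequality of the projection
gives `⟪p' - p, v - p⟫ ≥ ‖p' - p‖² > 0` for all `v ∈ conv(S)`, so `p'` has no strict pivot.
-/

section

variable {E : Type*} [NormedAddCommGroup E] [InnerProductSpace ℝ E]

theorem exists_inner_sub_nonpos_of_mem_convexHull {s : Set E} {p : E}
    (hp : p ∈ convexHull ℝ s) (w : E) : ∃ v ∈ s, ⟪w, v - p⟫ ≤ 0 := by
  obtain ⟨v, hv, hle⟩ :=
    ((innerₗ E w).concaveOn convex_univ).exists_le_of_mem_convexHull (Set.subset_univ s) hp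
  refine ⟨v, hv, ?_⟩
  rw [inner_sub_right]
  exact sub_nonpos.mpr hle

theorem exists_mem_forall_inner_sub_pos_of_notMem {K : Set E} (hne : K.Nonempty)
    (hcomplete : IsComplete K) (hconv : Convex ℝ K) {p : E} (hp : p ∉ K) :
    ∃ p' ∈ K, ∀ v ∈ K, 0 < ⟪p' - p, v - p⟫ := by
  obtain ⟨p', hp'K, hmin⟩ := exists_norm_eq_iInf_of_complete_convex hne hcomplete hconv p
  have hproj := (norm_eq_iInf_iff_real_inner_le_zero hconv hp'K).mp hmin
  have hp'p : p' ≠ p := fun h => hp (h ▸ hp'K)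
  have hpos : 0 < ‖p' - p‖ ^ 2 := pow_pos (norm_sub_pos_iff.mpr hp'p) 2
  refine ⟨p', hp'K, fun v hv => ?_⟩
  have hsplit : ⟪p' - p, v - p⟫ = ‖p' - p‖ ^ 2 - ⟪p - p', v - p'⟫ := by
    rw [← real_inner_self_eq_norm_sq, ← neg_sub p' p, inner_neg_left, sub_neg_eq_add,
      ← inner_add_right]
    congr 1
    abel
  linarith [hproj v hv]

end

theorem strict_distance_duality_general {m : ℕ} (S : Finset (EuclideanSpace ℝ (Fin m)))
    (hS : S.Nonempty) (p : EuclideanSpace ℝ (Fin m)) :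
    p ∈ convexHull ℝ (S : Set (EuclideanSpace ℝ (Fin m))) ↔
      ∀ p' ∈ convexHull ℝ (S : Set (EuclideanSpace ℝ (Fin m))), p' ≠ p →
        ∃ v ∈ S, ⟪p' - p, v - p⟫ ≤ (0 : ℝ) := by
  refine ⟨fun hpc p' _ _ => exists_inner_sub_nonpos_of_mem_convexHull hpc (p' - p), fun h => ?_⟩
  by_contra hpc
  have hcompact := S.finite_toSet.isCompact_convexHull (𝕜 := ℝ)
  obtain ⟨p', hp'K, hpos⟩ := exists_mem_forall_inner_sub_pos_of_notMem
    (hS.to_set.mono (subset_convexHull ℝ _)) hcompact.isClosed.isComplete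
    (convex_convexHull ℝ _) hpc
  obtain ⟨v, hv, hle⟩ := h p' hp'K (fun h => hpc (h ▸ hp'K))
  exact (hpos v (subset_convexHull ℝ _ hv)).not_ge hle

/-- **Strict Distance Duality.** Assume `p ∉ S`. Then `p ∈ conv(S)` iff every
`p' ∈ conv(S)` with `p' ≠ p` admits a strict pivot, i.e. a point `v ∈ S` with
`⟨p' - p, v - p⟩ ≤ 0` (the angle `∠ p' p v` is at least `π/2`). -/
theorem strict_distance_duality {m : ℕ} (S : Finset (EuclideanSpace ℝ (Fin m)))
    (hS : S.Nonempty) (p : EuclideanSpace ℝ (Fin m)) (hp : p ∉ S) :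
    p ∈ convexHull ℝ (S : Set (EuclideanSpace ℝ (Fin m))) ↔
      ∀ p' ∈ convexHull ℝ (S : Set (EuclideanSpace ℝ (Fin m))), p' ≠ p →
        ∃ v ∈ S, ⟪p' - p, v - p⟫ ≤ (0 : ℝ) :=
  strict_distance_duality_general S hS p
end

section
/- Let S be a finite nonempty set of points in ℝ^m, p ∈ ℝ^m, and suppose p' ∈ conv(S) is a witness, i.e., d(p', v) < d(p, v) for all v ∈ S. Then (1/2)·d(p, p') ≤ d(p, conv(S)) ≤ d(p, p'), where d(p, conv(S)) denotes the distance from p to the set conv(S). -/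
open RealInnerProductSpace in
/-- If `p' ∈ conv(S)` is a witness, then
`(1/2) d(p, p') ≤ d(p, conv(S)) ≤ d(p, p')`. -/
theorem witness_distance_estimate {m : ℕ} (S : Finset (EuclideanSpace ℝ (Fin m)))
    (hS : S.Nonempty) (p p' : EuclideanSpace ℝ (Fin m))
    (hp' : p' ∈ convexHull ℝ (S : Set (EuclideanSpace ℝ (Fin m))))
    (hwit : ∀ v ∈ S, dist p' v < dist p v) :
    (1 / 2 : ℝ) * dist p p' ≤
        Metric.infDist p (convexHull ℝ (S : Set (EuclideanSpace ℝ (Fin m)))) ∧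
      Metric.infDist p (convexHull ℝ (S : Set (EuclideanSpace ℝ (Fin m)))) ≤ dist p p' := by
  have key : ∀ x ∈ convexHull ℝ (S : Set (EuclideanSpace ℝ (Fin m))),
      dist x p' ≤ dist x p := by
    intro x hx
    have hconv : Convex ℝ {z : EuclideanSpace ℝ (Fin m) |
        ⟪p - p', z⟫ ≤ (‖p‖ ^ 2 - ‖p'‖ ^ 2) / 2} :=
      convex_halfSpace_le (innerSL ℝ (p - p')).toLinearMap.isLinear _
    have hsub : (S : Set (EuclideanSpace ℝ (Fin m))) ⊆
        {z | ⟪p - p', z⟫ ≤ (‖p‖ ^ 2 - ‖p'‖ ^ 2) / 2} := by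
      intro v hv
      have h2 : dist p' v ^ 2 ≤ dist p v ^ 2 :=
        pow_le_pow_left₀ dist_nonneg (hwit v hv).le 2
      simp only [dist_eq_norm, norm_sub_sq_real] at h2
      simp only [Set.mem_setOf_eq, inner_sub_left]
      nlinarith [real_inner_comm p v, real_inner_comm p' v]
    have hx' := convexHull_min hsub hconv hx
    simp only [Set.mem_setOf_eq, inner_sub_left] at hx'
    have h2 : dist x p' ^ 2 ≤ dist x p ^ 2 := by
      simp only [dist_eq_norm, norm_sub_sq_real]
      nlinarith [real_inner_comm x p, real_inner_comm x p']
    exact (pow_le_pow_iff_left₀ dist_nonneg dist_nonneg two_ne_zero).mp h2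
  have hne : (convexHull ℝ (S : Set (EuclideanSpace ℝ (Fin m)))).Nonempty := ⟨p', hp'⟩
  constructor
  · by_contra hlt
    push_neg at hlt
    obtain ⟨y, hy, hdy⟩ := (Metric.infDist_lt_iff hne).mp hlt
    have h1 : dist p p' ≤ dist p y + dist y p' := dist_triangle _ _ _
    have h2 := key y hy
    rw [dist_comm y p] at h2
    linarith
  · exact Metric.infDist_le_dist_of_mem hp'
end

section
/- Let p, p', v ∈ ℝ^m with p ≠ p' and p' ≠ v. If v is a pivot relative to p at p', i.e., d(p', v) ≥ d(p, v), and p'' is the point of the closed segment [p', v] closest to p, then d(p, p'') < d(p, p') (each pivot step strictly decreases the distance to p). -/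
/-!
Write `w = (1 - t) p' + t v`. In an inner product space
`d(p, w)² = (1 - t) d(p, p')² + t d(p, v)² - t (1 - t) d(p', v)²`, so the pivot condition gives
`d(p, w)² ≤ (1 - t) d(p, p')² + t² d(p', v)²`, which is below `d(p, p')²` for small `t > 0`
since `d(p, p') > 0`. The closest point of `[p', v]` is at least that close.
-/

open AffineMap

section

variable {E : Type*} [NormedAddCommGroup E] [InnerProductSpace ℝ E]

theorem dist_lineMap_sq (x y z : E) (t : ℝ) :
    dist z (lineMap x y t) ^ 2 =
      (1 - t) * dist z x ^ 2 + t * dist z y ^ 2 - t * (1 - t) * dist x y ^ 2 := by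
  have hzy : z - y = (z - x) - (y - x) := by abel
  have hzw : z - lineMap x y t = (z - x) - t • (y - x) := by
    rw [lineMap_apply_module']; abel
  simp only [dist_eq_norm, hzw, hzy, norm_sub_rev x y, norm_sub_sq_real, norm_smul,
    real_inner_smul_right, Real.norm_eq_abs, mul_pow, sq_abs]
  ring

theorem exists_mem_segment_dist_lt_of_dist_le {x y z : E} (hzx : z ≠ x)
    (hzy : dist z y ≤ dist x y) : ∃ w ∈ segment ℝ x y, dist z w < dist z x := by
  set A := dist z x ^ 2
  set B := dist x y ^ 2
  have hA : 0 < A := by positivity [dist_pos.2 hzx]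
  have hB : 0 ≤ B := by positivity
  set t := A / (A + B)
  have ht0 : 0 < t := by positivity
  have ht1 : t ≤ 1 := (div_le_one (by positivity)).2 (by linarith)
  -- this is exactly what makes `(1 - t) * A + t ^ 2 * B < A`
  have htB : t * B < A := by
    rw [div_mul_eq_mul_div, div_lt_iff₀ (by positivity)]; nlinarith
  refine ⟨lineMap x y t, segment_eq_image_lineMap ℝ x y ▸ ⟨t, ⟨ht0.le, ht1⟩, rfl⟩, ?_⟩
  have hsq : dist z (lineMap x y t) ^ 2 < A := by
    have hzyB : dist z y ^ 2 ≤ B := pow_le_pow_left₀ dist_nonneg hzy 2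
    rw [dist_lineMap_sq]
    nlinarith
  exact lt_of_pow_lt_pow_left₀ 2 dist_nonneg hsq

end

theorem pivot_step_decreases_general {m : ℕ} (p p' v p'' : EuclideanSpace ℝ (Fin m))
    (hpp' : p ≠ p') (hpivot : dist p v ≤ dist p' v)
    (hmin : ∀ x ∈ segment ℝ p' v, dist p p'' ≤ dist p x) :
    dist p p'' < dist p p' := by
  obtain ⟨w, hw, hlt⟩ := exists_mem_segment_dist_lt_of_dist_le hpp' hpivot
  exact (hmin w hw).trans_lt hlt

/-- A pivot step strictly decreases the distance to `p`: if `d(p', v) ≥ d(p, v)`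
and `p''` is the point of `[p', v]` closest to `p`, then `d(p, p'') < d(p, p')`. -/
theorem pivot_step_decreases {m : ℕ} (p p' v p'' : EuclideanSpace ℝ (Fin m))
    (hpp' : p ≠ p') (hp'v : p' ≠ v) (hpivot : dist p v ≤ dist p' v)
    (hmem : p'' ∈ segment ℝ p' v)
    (hmin : ∀ x ∈ segment ℝ p' v, dist p p'' ≤ dist p x) :
    dist p p'' < dist p p' :=
  pivot_step_decreases_general p p' v p'' hpp' hpivot hmin
end

section
/- Let p, p', v ∈ ℝ^m with p' ≠ v, and let R > 0 satisfy d(p, p') ≤ R and d(p', v) ≤ R. If v is a pivot relative to p at p', i.e., d(p', v) ≥ d(p, v), and p'' is the point of the closed segment [p', v] closest to p, then d(p, p'')² ≤ d(p, p')² · (1 − d(p, p')² / (4R²)). -/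
/-!
Write `δ = d(p, p')` and walk from `p'` towards `v`: the point `p' + t (v - p')` is at squared
distance `δ² - 2t⟪p - p', v - p'⟫ + t² d(p', v)²` from `p`. The pivot condition says exactly
`δ² ≤ 2⟪p - p', v - p'⟫`, so this is at most `(1 - t) δ² + t² R²`, and the step
`t = δ² / (2R²) ∈ [0, 1]` brings it down to `δ² (1 - δ² / (4R²))`.
-/

open AffineMap

variable {E : Type*} [NormedAddCommGroup E] [InnerProductSpace ℝ E]

theorem sq_dist_lineMap (p p' v : E) (t : ℝ) :
    dist p (lineMap p' v t) ^ 2 =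
      dist p p' ^ 2 - 2 * t * inner ℝ (p - p') (v - p') + t ^ 2 * dist p' v ^ 2 := by
  have hsub : p - lineMap p' v t = (p - p') - t • (v - p') := by
    rw [lineMap_apply_module']
    abel
  rw [dist_eq_norm, hsub, norm_sub_sq_real, real_inner_smul_right, norm_smul, mul_pow,
    Real.norm_eq_abs, sq_abs, dist_eq_norm, dist_eq_norm']
  ring

theorem sq_dist_le_two_inner_of_dist_le {p p' v : E} (hpivot : dist p v ≤ dist p' v) :
    dist p p' ^ 2 ≤ 2 * inner ℝ (p - p') (v - p') := by
  have hsq : dist p v ^ 2 ≤ dist p' v ^ 2 := pow_le_pow_left₀ dist_nonneg hpivot 2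
  have hexpand : dist p v ^ 2 = dist p p' ^ 2 - 2 * inner ℝ (p - p') (v - p') + dist p' v ^ 2 := by
    simpa using sq_dist_lineMap p p' v 1
  linarith

theorem sq_dist_lineMap_le_of_pivot {p p' v : E} (hpivot : dist p v ≤ dist p' v) {t : ℝ}
    (ht : 0 ≤ t) :
    dist p (lineMap p' v t) ^ 2 ≤ (1 - t) * dist p p' ^ 2 + t ^ 2 * dist p' v ^ 2 := by
  rw [sq_dist_lineMap]
  nlinarith [sq_dist_le_two_inner_of_dist_le hpivot]

theorem pivot_step_progress_general {m : ℕ} (p p' v p'' : EuclideanSpace ℝ (Fin m))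
    (R : ℝ) (hR : 0 < R) (hR1 : dist p p' ≤ R) (hR2 : dist p' v ≤ R)
    (hpivot : dist p v ≤ dist p' v)
    (hmin : ∀ x ∈ segment ℝ p' v, dist p p'' ≤ dist p x) :
    dist p p'' ^ 2 ≤ dist p p' ^ 2 * (1 - dist p p' ^ 2 / (4 * R ^ 2)) := by
  set δ := dist p p'
  set t := δ ^ 2 / (2 * R ^ 2)
  have ht0 : 0 ≤ t := by positivity
  have ht1 : t ≤ 1 := by
    rw [div_le_one (by positivity)]
    nlinarith [pow_le_pow_left₀ dist_nonneg hR1 2]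
  have hmem : lineMap p' v t ∈ segment ℝ p' v := by
    rw [segment_eq_image_lineMap]
    exact Set.mem_image_of_mem _ ⟨ht0, ht1⟩
  calc dist p p'' ^ 2 ≤ dist p (lineMap p' v t) ^ 2 :=
        pow_le_pow_left₀ dist_nonneg (hmin _ hmem) 2
    _ ≤ (1 - t) * δ ^ 2 + t ^ 2 * dist p' v ^ 2 := sq_dist_lineMap_le_of_pivot hpivot ht0
    _ ≤ (1 - t) * δ ^ 2 + t ^ 2 * R ^ 2 := by gcongr
    _ = δ ^ 2 * (1 - δ ^ 2 / (4 * R ^ 2)) := by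
      simp only [t]
      field_simp
      ring

/-- Per-iteration progress of the triangle algorithm: if `d(p, p') ≤ R`,
`d(p', v) ≤ R`, `v` is a pivot (`d(p', v) ≥ d(p, v)`), and `p''` is the point of
`[p', v]` closest to `p`, then `d(p, p'')² ≤ d(p, p')² (1 - d(p, p')² / (4R²))`. -/
theorem pivot_step_progress {m : ℕ} (p p' v p'' : EuclideanSpace ℝ (Fin m))
    (hp'v : p' ≠ v) (R : ℝ) (hR : 0 < R) (hR1 : dist p p' ≤ R) (hR2 : dist p' v ≤ R)
    (hpivot : dist p v ≤ dist p' v)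
    (hmem : p'' ∈ segment ℝ p' v)
    (hmin : ∀ x ∈ segment ℝ p' v, dist p p'' ≤ dist p x) :
    dist p p'' ^ 2 ≤ dist p p' ^ 2 * (1 - dist p p' ^ 2 / (4 * R ^ 2)) :=
  pivot_step_progress_general p p' v p'' R hR hR1 hR2 hpivot hmin
end

section
/- Let p, p', v ∈ ℝ^m with p ≠ p' and p ≠ v, and suppose ⟨p' − p, v − p⟩ ≤ 0 (v is a strict pivot relative to p at p'). If p'' is the point of the closed segment [p', v] closest to p, then d(p, p'')² ≤ d(p, p')² · d(p, v)² / (d(p, p')² + d(p, v)²). -/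
open RealInnerProductSpace

section

variable {E : Type*} [NormedAddCommGroup E] [InnerProductSpace ℝ E]

theorem dist_sq_smul_add_smul_le_of_inner_nonpos {p x y : E} (h : ⟪x - p, y - p⟫ ≤ 0)
    {s t : ℝ} (hs : 0 ≤ s) (ht : 0 ≤ t) (hst : s + t = 1) :
    dist p (s • x + t • y) ^ 2 ≤ s ^ 2 * dist p x ^ 2 + t ^ 2 * dist p y ^ 2 := by
  have hsub : s • x + t • y - p = s • (x - p) + t • (y - p) := by
    conv_lhs => rw [← one_smul ℝ p, ← hst, add_smul]
    rw [smul_sub, smul_sub]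
    abel
  have hcross : ⟪s • (x - p), t • (y - p)⟫ ≤ 0 := by
    rw [real_inner_smul_left, real_inner_smul_right]
    exact mul_nonpos_of_nonneg_of_nonpos hs (mul_nonpos_of_nonneg_of_nonpos ht h)
  rw [dist_comm p, dist_comm p, dist_comm p, dist_eq_norm, dist_eq_norm, dist_eq_norm, hsub,
    norm_add_sq_real, norm_smul, norm_smul, Real.norm_of_nonneg hs, Real.norm_of_nonneg ht]
  nlinarith

/-- The optimal weights are `s = b / (a + b)`, `t = a / (a + b)` with `a = d(p, x)²`,
`b = d(p, y)²`; they minimise `s² a + t² b` on `s + t = 1`. -/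
theorem exists_mem_segment_dist_sq_le_of_inner_nonpos {p x y : E} (h : ⟪x - p, y - p⟫ ≤ 0) :
    ∃ z ∈ segment ℝ x y,
      dist p z ^ 2 ≤ dist p x ^ 2 * dist p y ^ 2 / (dist p x ^ 2 + dist p y ^ 2) := by
  set a := dist p x ^ 2
  set b := dist p y ^ 2
  have ha : 0 ≤ a := sq_nonneg _
  have hb : 0 ≤ b := sq_nonneg _
  rcases (add_nonneg ha hb).eq_or_lt with hab | hab
  · exact ⟨x, left_mem_segment ℝ x y, by rw [← hab, div_zero]; linarith⟩
  have hst : b / (a + b) + a / (a + b) = 1 := by rw [← add_div, add_comm, div_self hab.ne']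
  refine ⟨(b / (a + b)) • x + (a / (a + b)) • y,
    ⟨_, _, by positivity, by positivity, hst, rfl⟩, ?_⟩
  calc _ ≤ (b / (a + b)) ^ 2 * a + (a / (a + b)) ^ 2 * b :=
        dist_sq_smul_add_smul_le_of_inner_nonpos h (by positivity) (by positivity) hst
    _ = a * b / (a + b) := by field_simp; ring

end

theorem strict_pivot_step_progress_general {m : ℕ} (p p' v p'' : EuclideanSpace ℝ (Fin m))
    (hstrict : ⟪p' - p, v - p⟫ ≤ (0 : ℝ))
    (hmin : ∀ x ∈ segment ℝ p' v, dist p p'' ≤ dist p x) :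
    dist p p'' ^ 2 ≤ dist p p' ^ 2 * dist p v ^ 2 / (dist p p' ^ 2 + dist p v ^ 2) := by
  obtain ⟨x, hx, hdist⟩ := exists_mem_segment_dist_sq_le_of_inner_nonpos hstrict
  exact (pow_le_pow_left₀ dist_nonneg (hmin x hx) 2).trans hdist

/-- Progress with a strict pivot: if `⟨p' - p, v - p⟩ ≤ 0` and `p''` is the point
of `[p', v]` closest to `p`, then
`d(p, p'')² ≤ d(p, p')² d(p, v)² / (d(p, p')² + d(p, v)²)`. -/
theorem strict_pivot_step_progress {m : ℕ} (p p' v p'' : EuclideanSpace ℝ (Fin m))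
    (hpp' : p ≠ p') (hpv : p ≠ v) (hstrict : ⟪p' - p, v - p⟫ ≤ (0 : ℝ))
    (hmem : p'' ∈ segment ℝ p' v)
    (hmin : ∀ x ∈ segment ℝ p' v, dist p p'' ≤ dist p x) :
    dist p p'' ^ 2 ≤ dist p p' ^ 2 * dist p v ^ 2 / (dist p p' ^ 2 + dist p v ^ 2) :=
  strict_pivot_step_progress_general p p' v p'' hstrict hmin
end

section
/- Let p, p', v ∈ ℝ^m with p ≠ p', let ρ ≥ 0 and R > 0 with ρ ≤ d(p, v) ≤ R, and suppose ⟨p' − p, v − p⟩ ≤ −ρ · d(p, p') (a strict pivot with margin ρ). If p'' is the point of the closed segment [p', v] closest to p, then d(p, p'')² ≤ d(p, p')² · (1 − ρ²/R²). -/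
open RealInnerProductSpace

/-!
Put `a = p' - p` and `b = v - p`. The margin gives `⟪a, b⟫ ≤ -ρ‖a‖ ≤ 0`, so the triangle `p p' v`
has no obtuse angle at `p'` or `v`, and the foot of the perpendicular from `p` to the line `p'v`
lies on `[p', v]`. Its squared distance to `p` is `‖a‖² - ⟪a, a - b⟫² / ‖a - b‖²`, and the gain
`⟪a, a - b⟫² / ‖a - b‖²` is at least `ρ²‖a‖² / R²` because `ρ‖a‖ ≤ -⟪a, b⟫` and `ρ, ‖b‖ ≤ R`.
-/

/-- When the angles at `x` and `y` of the triangle `pxy` are not obtuse, the foot of the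
perpendicular from `p` to the line `xy` lies on `[x, y]`. (If `x = y` the quotient is `0`.) -/
theorem exists_mem_segment_dist_sq_eq {E : Type*} [NormedAddCommGroup E] [InnerProductSpace ℝ E]
    (p x y : E) (hx : 0 ≤ ⟪x - p, x - y⟫) (hy : 0 ≤ ⟪y - p, y - x⟫) :
    ∃ z ∈ segment ℝ x y, dist p z ^ 2 = dist p x ^ 2 - ⟪x - p, x - y⟫ ^ 2 / dist x y ^ 2 := by
  set c := ⟪x - p, x - y⟫
  set D := dist x y ^ 2
  have hD : D = c + ⟪y - p, y - x⟫ := by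
    simp only [D, c]
    rw [← neg_sub x y, inner_neg_right, ← sub_eq_add_neg, ← inner_sub_left,
      sub_sub_sub_cancel_right, real_inner_self_eq_norm_sq, dist_eq_norm]
  rcases eq_or_ne D 0 with hD0 | hD0
  · exact ⟨x, left_mem_segment ℝ x y, by simp [hD0]⟩
  set t := c / D
  have ht : t ∈ Set.Icc (0 : ℝ) 1 :=
    ⟨div_nonneg hx (by positivity), div_le_one_of_le₀ (by linarith) (by positivity)⟩
  refine ⟨x + t • (y - x), segment_eq_image' ℝ x y ▸ ⟨t, ht, rfl⟩, ?_⟩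
  have hz : x + t • (y - x) - p = (x - p) - t • (x - y) := by
    rw [← neg_sub x y, smul_neg]; abel
  have hnorm : ‖(x - p) - t • (x - y)‖ ^ 2 = ‖x - p‖ ^ 2 - 2 * t * c + t ^ 2 * D := by
    rw [norm_sub_sq_real, inner_smul_right, norm_smul, Real.norm_eq_abs, abs_of_nonneg ht.1,
      mul_pow, ← dist_eq_norm x y]
    ring
  rw [dist_eq_norm', hz, hnorm, dist_eq_norm', ← dist_eq_norm]
  simp only [t]
  field_simp
  ring

/-- Read with `α = d(p, p')`, `β = d(p, v)` and `i = ⟪p' - p, v - p⟫`; the denominator is then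
`d(p', v)²`. -/
theorem sq_sub_sq_div_le_of_margin {α β i ρ R : ℝ} (hα : 0 < α) (hρ : 0 ≤ ρ) (hR : 0 < R)
    (hρβ : ρ ≤ β) (hβR : β ≤ R) (hi : i ≤ -ρ * α) :
    α ^ 2 - (α ^ 2 - i) ^ 2 / (α ^ 2 - 2 * i + β ^ 2) ≤ α ^ 2 * (1 - ρ ^ 2 / R ^ 2) := by
  have hρα : 0 ≤ ρ * α := by positivity
  have hi0 : i ≤ 0 := by linarith
  have hD : 0 < α ^ 2 - 2 * i + β ^ 2 := by nlinarith [sq_nonneg β]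
  have hρR : ρ ^ 2 ≤ R ^ 2 := pow_le_pow_left₀ hρ (hρβ.trans hβR) 2
  have hβR' : β ^ 2 ≤ R ^ 2 := pow_le_pow_left₀ (hρ.trans hρβ) hβR 2
  have hi' : (ρ * α) ^ 2 ≤ i ^ 2 := by nlinarith
  have hcross : ρ ^ 2 * α ^ 2 * (α ^ 2 - 2 * i + β ^ 2) ≤ (α ^ 2 - i) ^ 2 * R ^ 2 := by
    linear_combination
      mul_le_mul_of_nonneg_right hρR (by nlinarith : 0 ≤ α ^ 2 * (α ^ 2 - 2 * i)) +
      mul_le_mul hi' hβR' (sq_nonneg β) (sq_nonneg i)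
  have hgain : ρ ^ 2 * α ^ 2 / R ^ 2 ≤ (α ^ 2 - i) ^ 2 / (α ^ 2 - 2 * i + β ^ 2) := by
    rw [div_le_div_iff₀ (by positivity) hD]
    linarith
  rw [mul_one_sub, mul_div_assoc', mul_comm (α ^ 2)]
  linarith

theorem margin_pivot_step_progress_general {m : ℕ} (p p' v p'' : EuclideanSpace ℝ (Fin m))
    (hpp' : p ≠ p') (ρ R : ℝ) (hρ : 0 ≤ ρ) (hR : 0 < R)
    (hρv : ρ ≤ dist p v) (hvR : dist p v ≤ R)
    (hstrict : ⟪p' - p, v - p⟫ ≤ -ρ * dist p p')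
    (hmin : ∀ x ∈ segment ℝ p' v, dist p p'' ≤ dist p x) :
    dist p p'' ^ 2 ≤ dist p p' ^ 2 * (1 - ρ ^ 2 / R ^ 2) := by
  have hα : 0 < dist p p' := dist_pos.2 hpp'
  have hpv : p' - v = (p' - p) - (v - p) := (sub_sub_sub_cancel_right p' v p).symm
  have hx : ⟪p' - p, p' - v⟫ = dist p p' ^ 2 - ⟪p' - p, v - p⟫ := by
    rw [hpv, inner_sub_right, real_inner_self_eq_norm_sq, dist_eq_norm']
  have hy : ⟪v - p, v - p'⟫ = dist p v ^ 2 - ⟪p' - p, v - p⟫ := by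
    rw [← neg_sub p' v, hpv, inner_neg_right, inner_sub_right, real_inner_self_eq_norm_sq,
      real_inner_comm, dist_eq_norm']
    ring
  have hxy : dist p' v ^ 2 = dist p p' ^ 2 - 2 * ⟪p' - p, v - p⟫ + dist p v ^ 2 := by
    rw [dist_eq_norm, hpv, norm_sub_sq_real, dist_eq_norm', dist_eq_norm' p v]
  have hacute : 0 ≤ -⟪p' - p, v - p⟫ := by linarith [mul_nonneg hρ hα.le]
  obtain ⟨z, hz, hdist⟩ := exists_mem_segment_dist_sq_eq p p' v
    (by rw [hx]; linarith [sq_nonneg (dist p p')]) (by rw [hy]; linarith [sq_nonneg (dist p v)])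
  calc dist p p'' ^ 2 ≤ dist p z ^ 2 := pow_le_pow_left₀ dist_nonneg (hmin z hz) 2
    _ = dist p p' ^ 2 - ⟪p' - p, p' - v⟫ ^ 2 / dist p' v ^ 2 := hdist
    _ ≤ dist p p' ^ 2 * (1 - ρ ^ 2 / R ^ 2) := by
      rw [hx, hxy]
      exact sq_sub_sq_div_le_of_margin hα hρ hR hρv hvR hstrict

/-- Progress with a strict pivot with margin `ρ`: if `ρ ≤ d(p, v) ≤ R` and
`⟨p' - p, v - p⟩ ≤ -ρ d(p, p')`, and `p''` is the point of `[p', v]` closest to `p`,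
then `d(p, p'')² ≤ d(p, p')² (1 - ρ²/R²)`. -/
theorem margin_pivot_step_progress {m : ℕ} (p p' v p'' : EuclideanSpace ℝ (Fin m))
    (hpp' : p ≠ p') (ρ R : ℝ) (hρ : 0 ≤ ρ) (hR : 0 < R)
    (hρv : ρ ≤ dist p v) (hvR : dist p v ≤ R)
    (hstrict : ⟪p' - p, v - p⟫ ≤ -ρ * dist p p')
    (hmem : p'' ∈ segment ℝ p' v)
    (hmin : ∀ x ∈ segment ℝ p' v, dist p p'' ≤ dist p x) :
    dist p p'' ^ 2 ≤ dist p p' ^ 2 * (1 - ρ ^ 2 / R ^ 2) :=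
  margin_pivot_step_progress_general p p' v p'' hpp' ρ R hρ hR hρv hvR hstrict hmin
end

section
/- Let S = {v₁, …, vₙ} be a finite nonempty set of points in ℝ^m, let p ∈ conv(S), and let R = max{d(p, vᵢ) : 1 ≤ i ≤ n} > 0. Let (p_k)_{k≥0} be a sequence with p₀ ∈ conv(S), d(p, p₀) ≤ R, and for each k, p_{k+1} is the point of the closed segment [p_k, v] closest to p for some v ∈ S with d(p_k, v) ≥ d(p, v) (a pivot) and p_k ≠ v. Then d(p, p_k)² ≤ 16R²/k for every k ≥ 1; in particular, for every ε ∈ (0,1), after at most ⌈16/ε²⌉ iterations one has d(p, p_k) ≤ εR. -/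
/-!
Write `a = p - q` and `b = v - q`. The pivot condition `‖a - b‖ ≤ ‖b‖` says `‖a‖² ≤ 2⟪a, b⟫`, so
along the segment the squared distance to `p` is at most `(1 - t)‖a‖² + t²‖b‖²`. As `‖b‖ ≤ 2R`,
the choice `t = ‖a‖² / (8R²)` decreases `e = d(p, q)²` to at most `e - e² / (16R²)`, and this
recurrence forces `k e_k ≤ 16R²`.
-/

open AffineMap

section Pivot

variable {E : Type*} [NormedAddCommGroup E] [InnerProductSpace ℝ E]

theorem dist_lineMap_sq_le_of_dist_le {p q v : E} (hpiv : dist p v ≤ dist q v) {t : ℝ}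
    (ht : 0 ≤ t) :
    dist p (lineMap q v t) ^ 2 ≤ (1 - t) * dist p q ^ 2 + t ^ 2 * dist q v ^ 2 := by
  have hpv : dist p v = ‖(p - q) - (v - q)‖ := by rw [dist_eq_norm, sub_sub_sub_cancel_right]
  have hpx : dist p (lineMap q v t) = ‖(p - q) - t • (v - q)‖ := by
    rw [dist_eq_norm, lineMap_apply_module', sub_add_eq_sub_sub_swap]
  have hinner : ‖p - q‖ ^ 2 ≤ 2 * inner ℝ (p - q) (v - q) := by
    have := pow_le_pow_left₀ dist_nonneg hpiv 2
    rw [hpv, dist_comm, dist_eq_norm, norm_sub_sq_real] at this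
    linarith
  rw [hpx, dist_eq_norm, dist_comm, dist_eq_norm, norm_sub_sq_real, real_inner_smul_right,
    norm_smul, mul_pow, Real.norm_eq_abs, sq_abs]
  nlinarith

theorem exists_mem_segment_dist_sq_le_of_dist_le {p q v : E} {R : ℝ} (hR : 0 < R)
    (hpiv : dist p v ≤ dist q v) (hq : dist p q ≤ R) (hv : dist p v ≤ R) :
    ∃ x ∈ segment ℝ q v, dist p x ^ 2 ≤ dist p q ^ 2 - (dist p q ^ 2) ^ 2 / (16 * R ^ 2) := by
  set e := dist p q ^ 2
  have he : 0 ≤ e := sq_nonneg _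
  have heR : e ≤ R ^ 2 := pow_le_pow_left₀ dist_nonneg hq 2
  have hqv : dist q v ≤ 2 * R := by linarith [dist_triangle_left q v p]
  set t := e / (8 * R ^ 2)
  have ht0 : 0 ≤ t := by positivity
  have ht1 : t ≤ 1 := by rw [div_le_one (by positivity)]; linarith
  refine ⟨lineMap q v t, lineMap_mem_segment ℝ q v ⟨ht0, ht1⟩, ?_⟩
  calc dist p (lineMap q v t) ^ 2 ≤ (1 - t) * e + t ^ 2 * dist q v ^ 2 :=
        dist_lineMap_sq_le_of_dist_le hpiv ht0
    _ ≤ (1 - t) * e + t ^ 2 * (2 * R) ^ 2 := by gcongr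
    _ = e - e ^ 2 / (16 * R ^ 2) := by
        simp only [t]
        field_simp
        ring

end Pivot

theorem natCast_mul_le_of_le_sub_sq_div {C : ℝ} (hC : 0 < C) {e : ℕ → ℝ} (he : ∀ k, 0 ≤ e k)
    (hrec : ∀ k, e (k + 1) ≤ e k - e k ^ 2 / C) (k : ℕ) : k * e k ≤ C := by
  induction k with
  | zero => simpa using hC.le
  | succ k ih =>
    have hk : (0 : ℝ) ≤ k := k.cast_nonneg
    -- `C² - (k + 1)(C e - e²) = (e - s)² + (k + 1) e s` with `s = C - k e ≥ 0`
    have hquad : (k + 1) * (C * e k - e k ^ 2) ≤ C ^ 2 := by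
      nlinarith [sq_nonneg (e k - (C - k * e k)),
        mul_nonneg (mul_nonneg (by linarith : (0 : ℝ) ≤ k + 1) (he k)) (sub_nonneg.2 ih)]
    have hstep : C * e (k + 1) ≤ C * e k - e k ^ 2 := by
      have := mul_le_mul_of_nonneg_left (hrec k) hC.le
      rwa [mul_sub, mul_div_cancel₀ _ hC.ne'] at this
    push_cast
    nlinarith [he (k + 1)]

theorem triangle_algorithm_iteration_bound_general {m : ℕ}
    (S : Finset (EuclideanSpace ℝ (Fin m))) (hS : S.Nonempty)
    (p : EuclideanSpace ℝ (Fin m))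
    (R : ℝ) (hR : R = S.sup' hS fun v => dist p v) (hRpos : 0 < R)
    (q : ℕ → EuclideanSpace ℝ (Fin m))
    (hq0R : dist p (q 0) ≤ R)
    (hstep : ∀ k : ℕ, ∃ v ∈ S, dist p v ≤ dist (q k) v ∧ q k ≠ v ∧
      q (k + 1) ∈ segment ℝ (q k) v ∧
      ∀ x ∈ segment ℝ (q k) v, dist p (q (k + 1)) ≤ dist p x) :
    (∀ k : ℕ, 1 ≤ k → dist p (q k) ^ 2 ≤ 16 * R ^ 2 / k) ∧
      ∀ ε : ℝ, 0 < ε → ε < 1 → ∀ k : ℕ, ⌈(16 : ℝ) / ε ^ 2⌉₊ ≤ k →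
        dist p (q k) ≤ ε * R := by
  have hSR : ∀ v ∈ S, dist p v ≤ R := fun v hv => hR ▸ S.le_sup' (dist p) hv
  have hqR : ∀ k, dist p (q k) ≤ R := by
    rintro (_ | k)
    · exact hq0R
    · obtain ⟨v, hv, -, -, -, hmin⟩ := hstep k
      exact (hmin v (right_mem_segment ℝ _ _)).trans (hSR v hv)
  have hmul : ∀ k : ℕ, k * dist p (q k) ^ 2 ≤ 16 * R ^ 2 := by
    refine natCast_mul_le_of_le_sub_sq_div (by positivity) (fun k => sq_nonneg _) fun k => ?_
    obtain ⟨v, hv, hpiv, -, -, hmin⟩ := hstep k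
    obtain ⟨x, hx, hxp⟩ :=
      exists_mem_segment_dist_sq_le_of_dist_le hRpos hpiv (hqR k) (hSR v hv)
    exact (pow_le_pow_left₀ dist_nonneg (hmin x hx) 2).trans hxp
  have hbound : ∀ k : ℕ, 1 ≤ k → dist p (q k) ^ 2 ≤ 16 * R ^ 2 / k := fun k hk => by
    rw [le_div_iff₀ (by exact_mod_cast hk), mul_comm]
    exact hmul k
  refine ⟨hbound, fun ε hε _ k hk => ?_⟩
  have hk16 : 16 / ε ^ 2 ≤ (k : ℝ) := (Nat.le_ceil _).trans (by exact_mod_cast hk)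
  have hk1 : 1 ≤ k := hk.trans' (Nat.one_le_ceil_iff.2 (by positivity))
  refine pow_le_pow_iff_left₀ dist_nonneg (by positivity) two_ne_zero |>.1 ?_
  calc dist p (q k) ^ 2 ≤ 16 * R ^ 2 / k := hbound k hk1
    _ ≤ (ε * R) ^ 2 := by
      rw [div_le_iff₀ (by positivity)] at hk16 ⊢
      nlinarith [sq_nonneg R]

/-- Iteration count for the triangle algorithm with pivots: if `p ∈ conv(S)`,
`R = max_{v ∈ S} d(p, v) > 0`, and each iterate `p_{k+1}` is the point of
`[p_k, v]` closest to `p` for some pivot `v ∈ S` (`d(p_k, v) ≥ d(p, v)`,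
`p_k ≠ v`), then `d(p, p_k)² ≤ 16 R² / k` for all `k ≥ 1`; in particular, for
`ε ∈ (0, 1)`, `d(p, p_k) ≤ ε R` once `k ≥ ⌈16 / ε²⌉`. -/
theorem triangle_algorithm_iteration_bound {m : ℕ}
    (S : Finset (EuclideanSpace ℝ (Fin m))) (hS : S.Nonempty)
    (p : EuclideanSpace ℝ (Fin m))
    (hp : p ∈ convexHull ℝ (S : Set (EuclideanSpace ℝ (Fin m))))
    (R : ℝ) (hR : R = S.sup' hS fun v => dist p v) (hRpos : 0 < R)
    (q : ℕ → EuclideanSpace ℝ (Fin m))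
    (hq0 : q 0 ∈ convexHull ℝ (S : Set (EuclideanSpace ℝ (Fin m))))
    (hq0R : dist p (q 0) ≤ R)
    (hstep : ∀ k : ℕ, ∃ v ∈ S, dist p v ≤ dist (q k) v ∧ q k ≠ v ∧
      q (k + 1) ∈ segment ℝ (q k) v ∧
      ∀ x ∈ segment ℝ (q k) v, dist p (q (k + 1)) ≤ dist p x) :
    (∀ k : ℕ, 1 ≤ k → dist p (q k) ^ 2 ≤ 16 * R ^ 2 / k) ∧
      ∀ ε : ℝ, 0 < ε → ε < 1 → ∀ k : ℕ, ⌈(16 : ℝ) / ε ^ 2⌉₊ ≤ k →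
        dist p (q k) ≤ ε * R :=
  triangle_algorithm_iteration_bound_general S hS p R hR hRpos q hq0R hstep
end

section
/- Let v₁, v₂, v₃ ∈ ℝ² be affinely independent points, let Δ = conv{v₁, v₂, v₃}, and define the Hutchinson operator H(A) = f₁(A) ∪ f₂(A) ∪ f₃(A), where fᵢ(x) = (x + vᵢ)/2. Define the Sierpinski triangle T = ⋂_{n≥0} Hⁿ(Δ). Then each edge of Δ is contained in T; in particular, the closed segment [v₂, v₃] is a subset of T. -/
/-!
An edge `[a, b]` of the triangle is mapped by the contractions toward `a` and `b` onto its two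
halves, so it is contained in its own image under `H`. Since `H` is monotone and the edge lies
in `Δ`, induction on `n` puts the edge inside every `Hⁿ(Δ)`.
-/

open Set

lemma segment_subset_union_image_half {E : Type*} [AddCommGroup E] [Module ℝ E] (a b : E) :
    segment ℝ a b ⊆ (fun x => (2 : ℝ)⁻¹ • (x + a)) '' segment ℝ a b ∪
      (fun x => (2 : ℝ)⁻¹ • (x + b)) '' segment ℝ a b := by
  rintro _ ⟨s, t, hs, ht, hst, rfl⟩
  obtain rfl : t = 1 - s := by linarith
  rcases le_total (1 - s) s with hs_ge | hs_le
  · refine Or.inl ⟨(2 * s - 1) • a + (2 - 2 * s) • b, ⟨2 * s - 1, 2 - 2 * s, by linarith,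
      by linarith, by ring, rfl⟩, by module⟩
  · refine Or.inr ⟨(2 * s) • a + (1 - 2 * s) • b, ⟨2 * s, 1 - 2 * s, by linarith, by linarith,
      by ring, rfl⟩, by module⟩

lemma segment_subset_biUnion_image_half {E : Type*} [AddCommGroup E] [Module ℝ E] {V : Set E}
    {a b : E} (ha : a ∈ V) (hb : b ∈ V) :
    segment ℝ a b ⊆ ⋃ v ∈ V, (fun x => (2 : ℝ)⁻¹ • (x + v)) '' segment ℝ a b := by
  intro x hx
  rw [mem_iUnion₂]
  rcases segment_subset_union_image_half a b hx with hxa | hxb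
  exacts [⟨a, ha, hxa⟩, ⟨b, hb, hxb⟩]

lemma subset_iterate_of_subset_self {α : Type*} {H : Set α → Set α} (hH : Monotone H)
    {S A : Set α} (hSA : S ⊆ A) (hS : S ⊆ H S) (n : ℕ) : S ⊆ H^[n] A := by
  induction n with
  | zero => exact hSA
  | succ n ih =>
    rw [Function.iterate_succ_apply']
    exact hS.trans (hH ih)

theorem sierpinski_contains_edges_general (v₁ v₂ v₃ : EuclideanSpace ℝ (Fin 2))
    (Δ : Set (EuclideanSpace ℝ (Fin 2))) (hΔ : Δ = convexHull ℝ {v₁, v₂, v₃})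
    (H : Set (EuclideanSpace ℝ (Fin 2)) → Set (EuclideanSpace ℝ (Fin 2)))
    (hH : H = fun A =>
      ((fun x => (2 : ℝ)⁻¹ • (x + v₁)) '' A) ∪
      ((fun x => (2 : ℝ)⁻¹ • (x + v₂)) '' A) ∪
      ((fun x => (2 : ℝ)⁻¹ • (x + v₃)) '' A))
    (T : Set (EuclideanSpace ℝ (Fin 2))) (hT : T = ⋂ n : ℕ, H^[n] Δ) :
    segment ℝ v₁ v₂ ⊆ T ∧ segment ℝ v₁ v₃ ⊆ T ∧ segment ℝ v₂ v₃ ⊆ T := by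
  set V : Set (EuclideanSpace ℝ (Fin 2)) := {v₁, v₂, v₃}
  have hH_biUnion : H = fun A => ⋃ v ∈ V, (fun x => (2 : ℝ)⁻¹ • (x + v)) '' A := by
    ext A x
    simp [hH, V, or_assoc]
  have hH_mono : Monotone H := by
    rw [hH_biUnion]
    exact fun A B hAB => biUnion_mono subset_rfl fun v _ => image_mono hAB
  have edge_subset : ∀ a ∈ V, ∀ b ∈ V, segment ℝ a b ⊆ T := fun a ha b hb => by
    have hedge_Δ : segment ℝ a b ⊆ Δ := hΔ ▸ (convex_convexHull ℝ V).segment_subset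
      (subset_convexHull ℝ V ha) (subset_convexHull ℝ V hb)
    have hedge_H : segment ℝ a b ⊆ H (segment ℝ a b) :=
      hH_biUnion ▸ segment_subset_biUnion_image_half ha hb
    exact hT ▸ subset_iInter (subset_iterate_of_subset_self hH_mono hedge_Δ hedge_H)
  exact ⟨edge_subset _ (by simp [V]) _ (by simp [V]), edge_subset _ (by simp [V]) _ (by simp [V]),
    edge_subset _ (by simp [V]) _ (by simp [V])⟩

/-- Each edge of the triangle `Δ = conv{v₁, v₂, v₃}` is contained in the
Sierpinski triangle `T = ⋂ₙ Hⁿ(Δ)`, where `H` is the Hutchinson operator of the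
three half-way contractions toward the vertices; in particular `[v₂, v₃] ⊆ T`. -/
theorem sierpinski_contains_edges (v₁ v₂ v₃ : EuclideanSpace ℝ (Fin 2))
    (hindep : AffineIndependent ℝ ![v₁, v₂, v₃])
    (Δ : Set (EuclideanSpace ℝ (Fin 2))) (hΔ : Δ = convexHull ℝ {v₁, v₂, v₃})
    (H : Set (EuclideanSpace ℝ (Fin 2)) → Set (EuclideanSpace ℝ (Fin 2)))
    (hH : H = fun A =>
      ((fun x => (2 : ℝ)⁻¹ • (x + v₁)) '' A) ∪
      ((fun x => (2 : ℝ)⁻¹ • (x + v₂)) '' A) ∪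
      ((fun x => (2 : ℝ)⁻¹ • (x + v₃)) '' A))
    (T : Set (EuclideanSpace ℝ (Fin 2))) (hT : T = ⋂ n : ℕ, H^[n] Δ) :
    segment ℝ v₁ v₂ ⊆ T ∧ segment ℝ v₁ v₃ ⊆ T ∧ segment ℝ v₂ v₃ ⊆ T :=
  sierpinski_contains_edges_general v₁ v₂ v₃ Δ hΔ H hH T hT
end

section
/- Let v₁, v₂, v₃ ∈ ℝ² be affinely independent points, let Δ = conv{v₁, v₂, v₃}, define the Hutchinson operator H(A) = f₁(A) ∪ f₂(A) ∪ f₃(A) with fᵢ(x) = (x + vᵢ)/2, and let T = ⋂_{n≥0} Hⁿ(Δ) be the Sierpinski triangle. Let Σ be any subset of T whose closure contains T (a dense subset of T). Then for every p ∈ Δ, every vertex v ∈ {v₁, v₂, v₃}, and every ε > 0, there exists p' ∈ Σ such that the distance from p to the closed segment [v, p'] is less than ε. -/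
section Aux

variable {E : Type*} [NormedAddCommGroup E] [NormedSpace ℝ E]

private lemma seg_self_sub (a b : E) (A : Set E) (hA : segment ℝ a b ⊆ A) :
    segment ℝ a b ⊆
      ((fun x => (2 : ℝ)⁻¹ • (x + a)) '' A) ∪ ((fun x => (2 : ℝ)⁻¹ • (x + b)) '' A) := by
  rintro x ⟨u, v, hu, hv, huv, rfl⟩
  obtain rfl : u = 1 - v := by linarith
  rcases le_total v (1 / 2) with h | h
  · left
    exact ⟨(1 - 2 * v) • a + (2 * v) • b,
      hA ⟨1 - 2 * v, 2 * v, by linarith, by linarith, by linarith, rfl⟩, by module⟩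
  · right
    exact ⟨(2 - 2 * v) • a + (2 * v - 1) • b,
      hA ⟨2 - 2 * v, 2 * v - 1, by linarith, by linarith, by linarith, rfl⟩, by module⟩

private lemma edge_sub_iInter {H : Set E → Set E} (hmono : Monotone H)
    {Δ : Set E} {a b : E} (hΔ : segment ℝ a b ⊆ Δ)
    (hstep : ∀ A : Set E,
      ((fun x => (2 : ℝ)⁻¹ • (x + a)) '' A) ∪ ((fun x => (2 : ℝ)⁻¹ • (x + b)) '' A) ⊆ H A) :
    segment ℝ a b ⊆ ⋂ n : ℕ, H^[n] Δ := by
  refine Set.subset_iInter fun n => ?_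
  induction n with
  | zero => simpa
  | succ n ih =>
    rw [Function.iterate_succ_apply']
    exact fun x hx =>
      hmono ih (hstep _ (seg_self_sub a b _ subset_rfl hx))

private lemma dots_aux {w u₁ u₂ p : E} {S : Set E}
    (hedge : segment ℝ u₁ u₂ ⊆ closure S)
    (hp : p ∈ convexHull ℝ ({w, u₁, u₂} : Set E)) {ε : ℝ} (hε : 0 < ε) :
    ∃ p' ∈ S, Metric.infDist p (segment ℝ w p') < ε := by
  rw [convexHull_insert ⟨u₁, Set.mem_insert _ _⟩, convexHull_pair, mem_convexJoin] at hp
  obtain ⟨a, ha, r, hr, hpr⟩ := hp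
  rw [Set.mem_singleton_iff.mp ha] at hpr
  obtain ⟨t, s, ht, hs, hts, rfl⟩ := hpr
  obtain ⟨p', hp'S, hd⟩ := Metric.mem_closure_iff.mp (hedge hr) ε hε
  refine ⟨p', hp'S, ?_⟩
  calc Metric.infDist (t • w + s • r) (segment ℝ w p')
      ≤ dist (t • w + s • r) (t • w + s • p') :=
        Metric.infDist_le_dist_of_mem ⟨t, s, ht, hs, hts, rfl⟩
    _ = ‖s • (r - p')‖ := by rw [dist_eq_norm]; congr 1; module
    _ = s * ‖r - p'‖ := by rw [norm_smul, Real.norm_of_nonneg hs]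
    _ ≤ 1 * ‖r - p'‖ := by
        have hs1 : s ≤ 1 := by linarith
        nlinarith [norm_nonneg (r - p')]
    _ < ε := by rw [one_mul, ← dist_eq_norm]; exact hd

private lemma edge_in_hull (v₁ v₂ v₃ a b : E)
    (ha : a ∈ ({v₁, v₂, v₃} : Set E)) (hb : b ∈ ({v₁, v₂, v₃} : Set E)) :
    segment ℝ a b ⊆ convexHull ℝ ({v₁, v₂, v₃} : Set E) :=
  (convex_convexHull ℝ _).segment_subset (subset_convexHull ℝ _ ha) (subset_convexHull ℝ _ hb)

end Aux

/-- Proposition on Sierpinski dots: let `T` be the Sierpinski triangle on the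
triangle `Δ = conv{v₁, v₂, v₃}` and let `Σ` be any dense subset of `T`. Then for
every `p ∈ Δ`, every vertex `v ∈ {v₁, v₂, v₃}`, and every `ε > 0`, there is a
dot `p' ∈ Σ` such that the segment `[v, p']` comes within `ε` of `p`. -/
theorem sierpinski_dots_approximate (v₁ v₂ v₃ : EuclideanSpace ℝ (Fin 2))
    (hindep : AffineIndependent ℝ ![v₁, v₂, v₃])
    (Δ : Set (EuclideanSpace ℝ (Fin 2))) (hΔ : Δ = convexHull ℝ {v₁, v₂, v₃})
    (H : Set (EuclideanSpace ℝ (Fin 2)) → Set (EuclideanSpace ℝ (Fin 2)))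
    (hH : H = fun A =>
      ((fun x => (2 : ℝ)⁻¹ • (x + v₁)) '' A) ∪
      ((fun x => (2 : ℝ)⁻¹ • (x + v₂)) '' A) ∪
      ((fun x => (2 : ℝ)⁻¹ • (x + v₃)) '' A))
    (T : Set (EuclideanSpace ℝ (Fin 2))) (hT : T = ⋂ n : ℕ, H^[n] Δ)
    (Sdots : Set (EuclideanSpace ℝ (Fin 2))) (hSsub : Sdots ⊆ T) (hSdense : T ⊆ closure Sdots) :
    ∀ p ∈ Δ, ∀ v ∈ ({v₁, v₂, v₃} : Set (EuclideanSpace ℝ (Fin 2))), ∀ ε : ℝ, 0 < ε →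
      ∃ p' ∈ Sdots, Metric.infDist p (segment ℝ v p') < ε := by
  subst hΔ hH hT
  intro p hp v hv ε hε
  have hmono : Monotone (fun A : Set (EuclideanSpace ℝ (Fin 2)) =>
      ((fun x => (2 : ℝ)⁻¹ • (x + v₁)) '' A) ∪
      ((fun x => (2 : ℝ)⁻¹ • (x + v₂)) '' A) ∪
      ((fun x => (2 : ℝ)⁻¹ • (x + v₃)) '' A)) := fun A B h =>
    Set.union_subset_union (Set.union_subset_union (Set.image_mono h) (Set.image_mono h))
      (Set.image_mono h)
  rw [Set.mem_insert_iff, Set.mem_insert_iff, Set.mem_singleton_iff] at hv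
  rcases hv with h | h | h <;> rw [h]
  · -- v = v₁, use the edge [v₂, v₃]
    have hedge : segment ℝ v₂ v₃ ⊆ closure Sdots := by
      refine (edge_sub_iInter hmono (edge_in_hull v₁ v₂ v₃ v₂ v₃ (by simp) (by simp))
        fun A => ?_).trans hSdense
      exact Set.union_subset (Set.subset_union_right.trans Set.subset_union_left)
        Set.subset_union_right
    exact dots_aux hedge hp hε
  · -- v = v₂, use the edge [v₁, v₃]
    have hedge : segment ℝ v₁ v₃ ⊆ closure Sdots := by
      refine (edge_sub_iInter hmono (edge_in_hull v₁ v₂ v₃ v₁ v₃ (by simp) (by simp))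
        fun A => ?_).trans hSdense
      exact Set.union_subset (Set.subset_union_left.trans Set.subset_union_left)
        Set.subset_union_right
    rw [Set.insert_comm] at hp
    exact dots_aux hedge hp hε
  · -- v = v₃, use the edge [v₁, v₂]
    have hedge : segment ℝ v₁ v₂ ⊆ closure Sdots := by
      refine (edge_sub_iInter hmono (edge_in_hull v₁ v₂ v₃ v₁ v₂ (by simp) (by simp))
        fun A => ?_).trans hSdense
      exact Set.subset_union_left
    have hp' : p ∈ convexHull ℝ ({v₃, v₁, v₂} : Set (EuclideanSpace ℝ (Fin 2))) := by
      have : ({v₁, v₂, v₃} : Set (EuclideanSpace ℝ (Fin 2))) = {v₃, v₁, v₂} := by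
        ext x
        simp only [Set.mem_insert_iff, Set.mem_singleton_iff]
        tauto
      rwa [this] at hp
    exact dots_aux hedge hp' hε
end
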